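/- Let R be a commutative ring with 1 ≠ 0, M an R-module, and I a non-zero cdf-absorbing ideal of R. Then I(+)M, the ideal of the idealization R(+)M consisting of all elements (i, m) with i ∈ I and m ∈ M, is a cdf-absorbing ideal of R(+)M. -/

import Mathlib

/-- A proper ideal `I` of a commutative ring `R` is a cubes-difference factor absorbing
ideal (cdf-absorbing ideal) if whenever `a^3 - b^3 ∈ I`, then `a - b ∈ I` or
`a^2 + a*b + b^2 ∈ I`. -/
def IsCdfAbsorbing {R : Type*} [CommRing R] (I : Ideal R) : Prop :=
  I ≠ ⊤ ∧ ∀ a b : R, a ^ 3 - b ^ 3 ∈ I → a - b ∈ I ∨ a ^ 2 + a * b + b ^ 2 ∈ I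

theorem IsCdfAbsorbing.comap {R S : Type*} [CommRing R] [CommRing S] {I : Ideal S}
    (hI : IsCdfAbsorbing I) (f : R →+* S) : IsCdfAbsorbing (I.comap f) := by
  refine ⟨Ideal.comap_ne_top f hI.1, fun a b hab => ?_⟩
  rw [Ideal.mem_comap, map_sub, map_pow, map_pow] at hab
  simpa only [Ideal.mem_comap, map_sub, map_add, map_mul, map_pow] using hI.2 (f a) (f b) hab

theorem stmt_16_general {R M : Type*} [CommRing R] [AddCommGroup M] [Module R M]
    [Module Rᵐᵒᵖ M] [IsCentralScalar R M]
    (I : Ideal R) (hI : IsCdfAbsorbing I) :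
    IsCdfAbsorbing (I.comap (TrivSqZeroExt.fstHom R R M).toRingHom) :=
  hI.comap _

theorem stmt_16 {R M : Type*} [CommRing R] [Nontrivial R] [AddCommGroup M] [Module R M]
    [Module Rᵐᵒᵖ M] [IsCentralScalar R M]
    (I : Ideal R) (hI0 : I ≠ ⊥) (hI : IsCdfAbsorbing I) :
    IsCdfAbsorbing (I.comap (TrivSqZeroExt.fstHom R R M).toRingHom) :=
  stmt_16_general I hI
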